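/- arXiv:1303.5239 — 2 statements merged into one kernel-verified Lean document; each statement's English description precedes it below -/
import Mathlib

section
/- Let $G$ be a finite inverse semigroup acting by endomorphisms on a locally finite inverse semigroup $A$, and let $\sigma : \mathbb{N} \to \mathbb{N}$ be a non-decreasing function such that every $k$-generated subsemigroup of $A$ has cardinality at most $\sigma(k)$. Then every $m$-generated subsemigroup of the $\lambda$-semidirect product of $G$ acting on $A$ has cardinality at most $|G| \cdot \sigma(m|G|)$. -/
/-- A semigroup is inverse if every element has a unique inverse. -/
def IsInverseSemigroup (S : Type*) [Semigroup S] : Prop :=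
  ∀ x : S, ∃! y : S, x * y * x = x ∧ y * x * y = y

/-- Multiplication of the λ-semidirect product of `G` acting on `A`. -/
def lamMul {A G : Type*} [Mul A] [Mul G] (act : G → A → A) (invG : G → G)
    (p q : A × G) : A × G :=
  (act ((p.2 * q.2) * invG (p.2 * q.2)) p.1 * act p.2 q.1, p.2 * q.2)

/-- Underlying set of the λ-semidirect product of `G` acting on `A`. -/
def lamSet {A G : Type*} [Mul G] (act : G → A → A) (invG : G → G) : Set (A × G) :=
  {p | act (p.2 * invG p.2) p.1 = p.1}

/-!
The first coordinates of elements generated by `Y` lie in the subsemigroup of `A` generated by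
the `G`-orbit `U` of the first coordinates of `Y`: that subsemigroup is `G`-invariant because `G`
acts by endomorphisms, so the pairs in `lamSet` with first coordinate in it form a subsemigroup
of the λ-semidirect product containing `Y`. Since `|U| ≤ m |G|`, the generated subsemigroup has
at most `σ (m |G|)` choices of first and `|G|` choices of second coordinate.
-/

theorem Set.ncard_image2_le {α β γ : Type*} (f : α → β → γ) {s : Set α} {t : Set β}
    (hs : s.Finite) (ht : t.Finite) : (Set.image2 f s t).ncard ≤ s.ncard * t.ncard := by
  rw [← Set.image_uncurry_prod, ← Set.ncard_prod]
  exact Set.ncard_image_le (hs.prod ht)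

theorem Subsemigroup.mapsTo_closure {M : Type*} [Mul M] (f : M →ₙ* M) {s : Set M}
    (hf : Set.MapsTo f s s) : Set.MapsTo f (closure s) (closure s) := fun _ hx =>
  (f.map_mclosure s ▸ closure_mono hf.image_subset) (mem_map_of_mem f hx)

section LambdaSemidirect

variable {A G : Type*}

def lamClosure [Mul A] [Mul G] (act : G → A → A) (invG : G → G) (Y : Set (A × G)) :
    Set (A × G) :=
  {x | ∀ T : Set (A × G), Y ⊆ T → T ⊆ lamSet act invG →
    (∀ p ∈ T, ∀ q ∈ T, lamMul act invG p q ∈ T) → x ∈ T}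

theorem lamClosure_subset [Mul A] [Mul G] {act : G → A → A} {invG : G → G}
    {Y T : Set (A × G)} (hYT : Y ⊆ T) (hT : T ⊆ lamSet act invG)
    (hT_mul : ∀ p ∈ T, ∀ q ∈ T, lamMul act invG p q ∈ T) : lamClosure act invG Y ⊆ T :=
  fun _ hx => hx T hYT hT hT_mul

theorem lamMul_mem_lamSet [Mul A] [Semigroup G] {act : G → A → A} {invG : G → G}
    (hinvG : ∀ g : G, g * invG g * g = g)
    (hact_mul : ∀ (g : G) (a b : A), act g (a * b) = act g a * act g b)
    (hact_comp : ∀ (g h : G) (a : A), act (g * h) a = act g (act h a))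
    {p q : A × G} (hp : p ∈ lamSet act invG) (hq : q ∈ lamSet act invG) :
    lamMul act invG p q ∈ lamSet act invG := by
  obtain ⟨α, g⟩ := p
  obtain ⟨β, h⟩ := q
  simp only [lamSet, Set.mem_ofPred_eq, lamMul] at hp hq ⊢
  set e := g * h * invG (g * h)
  have he_idem : e * e = e := by
    calc e * e = (g * h * invG (g * h) * (g * h)) * invG (g * h) := by simp only [e, mul_assoc]
      _ = e := by rw [hinvG]
  have he_g : act (e * g) β = act g β := by
    have : e * g * (h * invG h) = g * (h * invG h) := by
      calc e * g * (h * invG h) = (g * h * invG (g * h) * (g * h)) * invG h := by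
            simp only [e, mul_assoc]
        _ = g * (h * invG h) := by rw [hinvG, mul_assoc]
    rw [← hq, ← hact_comp, this, hact_comp, hq]
  rw [hact_mul, ← hact_comp, ← hact_comp, he_idem, he_g]

theorem lamClosure_fst_mem_closure_image2 [Mul A] [Semigroup G] {act : G → A → A} {invG : G → G}
    (hinvG : ∀ g : G, g * invG g * g = g)
    (hact_mul : ∀ (g : G) (a b : A), act g (a * b) = act g a * act g b)
    (hact_comp : ∀ (g h : G) (a : A), act (g * h) a = act g (act h a))
    {Y : Set (A × G)} (hY : Y ⊆ lamSet act invG) {x : A × G} (hx : x ∈ lamClosure act invG Y) :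
    x.1 ∈ Subsemigroup.closure (Set.image2 act Set.univ (Prod.fst '' Y)) := by
  set W := Subsemigroup.closure (Set.image2 act Set.univ (Prod.fst '' Y))
  have hW_act (g : G) : Set.MapsTo (act g) W W :=
    Subsemigroup.mapsTo_closure ⟨act g, hact_mul g⟩ <| by
      rintro _ ⟨h, -, a, ha, rfl⟩
      exact ⟨g * h, trivial, a, ha, hact_comp g h a⟩
  have hY_W : Y ⊆ {p | p.1 ∈ W ∧ p ∈ lamSet act invG} := by
    rintro ⟨α, g⟩ hy
    have hα : act (g * invG g) α = α := hY hy
    exact ⟨Subsemigroup.subset_closure ⟨g * invG g, trivial, α, ⟨_, hy, rfl⟩, hα⟩, hY hy⟩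
  refine (lamClosure_subset hY_W (fun _ hp => hp.2) ?_ hx).1
  rintro p ⟨hp, hp_lam⟩ q ⟨hq, hq_lam⟩
  exact ⟨W.mul_mem (hW_act _ hp) (hW_act _ hq),
    lamMul_mem_lamSet hinvG hact_mul hact_comp hp_lam hq_lam⟩

end LambdaSemidirect

theorem lamSemidirect_card_bound_general {A G : Type*} [Semigroup A] [Semigroup G]
    [Finite G]
    (invG : G → G)
    (hinvG : ∀ g : G, g * invG g * g = g ∧ invG g * g * invG g = invG g)
    (act : G → A → A)
    (hact_mul : ∀ (g : G) (a b : A), act g (a * b) = act g a * act g b)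
    (hact_comp : ∀ (g h : G) (a : A), act (g * h) a = act g (act h a))
    (hAlf : ∀ U : Set A, U.Finite → (Subsemigroup.closure U : Set A).Finite)
    (σ : ℕ → ℕ)
    (hbound : ∀ (k : ℕ) (U : Set A), U.Finite → U.ncard ≤ k →
      (Subsemigroup.closure U : Set A).ncard ≤ σ k) :
    ∀ (m : ℕ) (Y : Set (A × G)), Y.Finite → Y.ncard ≤ m → Y ⊆ lamSet act invG →
      Set.Finite {x : A × G | ∀ T : Set (A × G), Y ⊆ T → T ⊆ lamSet act invG →
          (∀ p ∈ T, ∀ q ∈ T, lamMul act invG p q ∈ T) → x ∈ T} ∧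
      Set.ncard {x : A × G | ∀ T : Set (A × G), Y ⊆ T → T ⊆ lamSet act invG →
          (∀ p ∈ T, ∀ q ∈ T, lamMul act invG p q ∈ T) → x ∈ T}
        ≤ Nat.card G * σ (m * Nat.card G) := by
  intro m Y hY_fin hY_card hY
  set U := Set.image2 act Set.univ (Prod.fst '' Y)
  have hU_fin : U.Finite := Set.finite_univ.image2 _ (hY_fin.image _)
  have hU_card : U.ncard ≤ m * Nat.card G :=
    calc U.ncard ≤ (Set.univ : Set G).ncard * (Prod.fst '' Y).ncard :=
          Set.ncard_image2_le act Set.finite_univ (hY_fin.image _)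
      _ ≤ Nat.card G * m :=
          Nat.mul_le_mul (Set.ncard_univ G).le ((Set.ncard_image_le hY_fin).trans hY_card)
      _ = m * Nat.card G := Nat.mul_comm _ _
  have hsub : lamClosure act invG Y ⊆ (Subsemigroup.closure U : Set A) ×ˢ Set.univ :=
    fun x hx => ⟨lamClosure_fst_mem_closure_image2 (fun g => (hinvG g).1) hact_mul hact_comp
      hY hx, trivial⟩
  have hprod_fin := (hAlf U hU_fin).prod (Set.finite_univ (α := G))
  refine ⟨hprod_fin.subset hsub, ?_⟩
  calc (lamClosure act invG Y).ncard ≤ (Subsemigroup.closure U : Set A).ncard * Nat.card G := by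
        rw [← Set.ncard_univ G, ← Set.ncard_prod]; exact Set.ncard_le_ncard hsub hprod_fin
    _ ≤ σ (m * Nat.card G) * Nat.card G := Nat.mul_le_mul_right _ (hbound _ U hU_fin hU_card)
    _ = Nat.card G * σ (m * Nat.card G) := Nat.mul_comm _ _

theorem lamSemidirect_card_bound {A G : Type*} [Semigroup A] [Semigroup G]
    [Finite G]
    (hA : IsInverseSemigroup A) (hG : IsInverseSemigroup G)
    (invG : G → G)
    (hinvG : ∀ g : G, g * invG g * g = g ∧ invG g * g * invG g = invG g)
    (act : G → A → A)
    (hact_mul : ∀ (g : G) (a b : A), act g (a * b) = act g a * act g b)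
    (hact_comp : ∀ (g h : G) (a : A), act (g * h) a = act g (act h a))
    (hAlf : ∀ U : Set A, U.Finite → (Subsemigroup.closure U : Set A).Finite)
    (σ : ℕ → ℕ) (hσ : Monotone σ)
    (hbound : ∀ (k : ℕ) (U : Set A), U.Finite → U.ncard ≤ k →
      (Subsemigroup.closure U : Set A).ncard ≤ σ k) :
    ∀ (m : ℕ) (Y : Set (A × G)), Y.Finite → Y.ncard ≤ m → Y ⊆ lamSet act invG →
      Set.Finite {x : A × G | ∀ T : Set (A × G), Y ⊆ T → T ⊆ lamSet act invG →
          (∀ p ∈ T, ∀ q ∈ T, lamMul act invG p q ∈ T) → x ∈ T} ∧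
      Set.ncard {x : A × G | ∀ T : Set (A × G), Y ⊆ T → T ⊆ lamSet act invG →
          (∀ p ∈ T, ∀ q ∈ T, lamMul act invG p q ∈ T) → x ∈ T}
        ≤ Nat.card G * σ (m * Nat.card G) :=
  lamSemidirect_card_bound_general invG hinvG act hact_mul hact_comp hAlf σ hbound
end

section
/- An inverse semigroup that is finitely generated and admits an idempotent-pure morphism onto a finite inverse semigroup is itself finite. -/
/-!
An element `a` is determined by `ρ a` and `a a⁻¹`: if `ρ a = ρ b` then purity makes `a⁻¹ b`
idempotent. It remains to see that the idempotents `a a⁻¹` take finitely many values. For a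
generator `u`, `(c u)(c u)⁻¹ = c (u u⁻¹) c⁻¹`, and purity makes the conjugation `e ↦ c⁻¹ e c` of
idempotents below `c c⁻¹` depend only on `ρ c`. Induction along a word for `a` then shows that
`a a⁻¹` is determined by the set of pairs `(ρ w, u) ∈ J × U` with `a a⁻¹ ≤ w (u u⁻¹) w⁻¹`.
-/

-- the natural partial order, read on idempotents
local notation:50 x:51 " ≤ₑ " y:51 => x * y = x

theorem mul_eq_self_trans {M : Type*} [Semigroup M] {x y z : M} (hxy : x ≤ₑ y) (hyz : y ≤ₑ z) :
    x ≤ₑ z := by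
  rw [← hxy, mul_assoc, hyz]

theorem Subsemigroup.closure_induction_right {M : Type*} [Semigroup M] {s : Set M}
    {motive : (m : M) → m ∈ closure s → Prop} (mem : ∀ x (hx : x ∈ s), motive x (subset_closure hx))
    (mul_right : ∀ x hx, ∀ y (hy : y ∈ s),
      motive x hx → motive (x * y) (mul_mem hx (subset_closure hy)))
    {x : M} (hx : x ∈ closure s) : motive x hx := by
  suffices motive x hx ∧ ∀ z (hz : z ∈ closure s), motive z hz → motive (z * x) (mul_mem hz hx)
    from this.1
  induction hx using closure_induction with
  | mem x hx => exact ⟨mem x hx, fun z hz hmz => mul_right z hz x hx hmz⟩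
  | mul x y hx hy ihx ihy =>
    refine ⟨ihy.2 x hx ihx.1, fun z hz hmz => ?_⟩
    simp_rw [← mul_assoc]
    exact ihy.2 _ (mul_mem hz hx) (ihx.2 z hz hmz)

namespace IsInverseSemigroup

variable {S : Type*} [Semigroup S] (hS : IsInverseSemigroup S)

noncomputable def inv (a : S) : S := (hS a).exists.choose

lemma mul_inv_mul (a : S) : a * hS.inv a * a = a := (hS a).exists.choose_spec.1

lemma inv_mul_inv (a : S) : hS.inv a * a * hS.inv a = hS.inv a := (hS a).exists.choose_spec.2

lemma eq_inv {a b : S} (h₁ : a * b * a = a) (h₂ : b * a * b = b) : b = hS.inv a :=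
  (hS a).unique ⟨h₁, h₂⟩ ⟨hS.mul_inv_mul a, hS.inv_mul_inv a⟩

lemma inv_inv (a : S) : hS.inv (hS.inv a) = a :=
  (hS.eq_inv (hS.inv_mul_inv a) (hS.mul_inv_mul a)).symm

lemma inv_eq_self {e : S} (he : IsIdempotentElem e) : hS.inv e = e :=
  (hS.eq_inv (by rw [he.eq, he.eq]) (by rw [he.eq, he.eq])).symm

lemma isIdempotentElem_mul_inv (a : S) : IsIdempotentElem (a * hS.inv a) := by
  rw [IsIdempotentElem, ← mul_assoc, hS.mul_inv_mul]

lemma isIdempotentElem_inv_mul (a : S) : IsIdempotentElem (hS.inv a * a) := by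
  rw [IsIdempotentElem, ← mul_assoc, hS.inv_mul_inv]

/-- `f (e f)⁻¹ e` is an inverse of `e f`, hence equals `(e f)⁻¹`, which is thereby idempotent;
so `e f`, the inverse of an idempotent, is idempotent too. -/
lemma isIdempotentElem_mul (hS : IsInverseSemigroup S) {e f : S} (he : IsIdempotentElem e)
    (hf : IsIdempotentElem f) : IsIdempotentElem (e * f) := by
  set x := hS.inv (e * f)
  have h₁ := hS.mul_inv_mul (e * f)
  have h₂ := hS.inv_mul_inv (e * f)
  have hx : f * x * e = x :=
    hS.eq_inv (a := e * f) (by grind [IsIdempotentElem]) (by grind [IsIdempotentElem])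
  have hxx : IsIdempotentElem x := by
    calc x * x = (f * x * e) * (f * x * e) := by rw [hx]
      _ = f * (x * (e * f) * x) * e := by simp only [mul_assoc]
      _ = x := by rw [h₂, hx]
  have : e * f = hS.inv x := hS.eq_inv h₂ h₁
  rwa [this, hS.inv_eq_self hxx]

lemma commute_of_isIdempotentElem (hS : IsInverseSemigroup S) {e f : S}
    (he : IsIdempotentElem e) (hf : IsIdempotentElem f) : Commute e f := by
  have hef := hS.isIdempotentElem_mul he hf
  have hfe := hS.isIdempotentElem_mul hf he
  have := hS.eq_inv (a := e * f) (b := f * e) (by grind [IsIdempotentElem])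
    (by grind [IsIdempotentElem])
  rw [hS.inv_eq_self hef] at this
  exact this.symm

lemma inv_mul (a b : S) : hS.inv (a * b) = hS.inv b * hS.inv a := by
  have hc := hS.commute_of_isIdempotentElem (hS.isIdempotentElem_mul_inv b)
    (hS.isIdempotentElem_inv_mul a)
  have ha := hS.mul_inv_mul a
  have ha' := hS.inv_mul_inv a
  have hb := hS.mul_inv_mul b
  have hb' := hS.inv_mul_inv b
  exact (hS.eq_inv (by grind [Commute, SemiconjBy]) (by grind [Commute, SemiconjBy])).symm

lemma isIdempotentElem_conj (w : S) {f : S} (hf : IsIdempotentElem f) :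
    IsIdempotentElem (w * f * hS.inv w) := by
  have hc := hS.commute_of_isIdempotentElem hf (hS.isIdempotentElem_inv_mul w)
  have hw := hS.mul_inv_mul w
  grind [Commute, SemiconjBy, IsIdempotentElem]

lemma conj_le_mul_inv (w f : S) : w * f * hS.inv w ≤ₑ w * hS.inv w := by
  rw [mul_assoc (w * f), ← mul_assoc (hS.inv w), hS.inv_mul_inv]

lemma mul_mul_inv_mul (a b : S) : a * b * hS.inv (a * b) = a * (b * hS.inv b) * hS.inv a := by
  simp only [hS.inv_mul, mul_assoc]

lemma inv_conj_le_of_le_conj {w y f : S} (hf : IsIdempotentElem f) (h : y ≤ₑ w * f * hS.inv w) :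
    hS.inv w * y * w ≤ₑ f := by
  have hc := hS.commute_of_isIdempotentElem hf (hS.isIdempotentElem_inv_mul w)
  have hw := hS.mul_inv_mul w
  grind [Commute, SemiconjBy, IsIdempotentElem]

lemma le_conj_of_inv_conj_le {c y f : S} (hy : IsIdempotentElem y) (hyc : y ≤ₑ c * hS.inv c)
    (h : hS.inv c * y * c ≤ₑ f) : y ≤ₑ c * f * hS.inv c := by
  have hc := hS.commute_of_isIdempotentElem hy (hS.isIdempotentElem_mul_inv c)
  have hc' := hS.mul_inv_mul c
  grind [Commute, SemiconjBy, IsIdempotentElem]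

/-- With `p = c⁻¹ w = w⁻¹ c` idempotent, the two conjugates `x = c⁻¹ y c` and `q = w⁻¹ y w`
satisfy `x = p q` and `q = p x`, whence `x = q`. -/
lemma inv_conj_eq_of_isIdempotentElem_inv_mul {c w y : S} (hp : IsIdempotentElem (hS.inv c * w))
    (hy : IsIdempotentElem y) (hyc : y ≤ₑ c * hS.inv c) (hyw : y ≤ₑ w * hS.inv w) :
    hS.inv c * y * c = hS.inv w * y * w := by
  set p := hS.inv c * w
  have hp' : hS.inv w * c = p := by
    rw [← hS.inv_eq_self hp, hS.inv_mul, hS.inv_inv]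
  have conj_idem : ∀ a, IsIdempotentElem (hS.inv a * y * a) := fun a => by
    simpa only [hS.inv_inv] using hS.isIdempotentElem_conj (hS.inv a) hy
  have sandwich : ∀ a b, y ≤ₑ b * hS.inv b →
      hS.inv a * y * a = (hS.inv a * b) * (hS.inv b * y * b) * (hS.inv b * a) := fun a b hyb => by
    have hc := hS.commute_of_isIdempotentElem hy (hS.isIdempotentElem_mul_inv b)
    calc hS.inv a * y * a = hS.inv a * (b * hS.inv b * y * (b * hS.inv b)) * a := by
          rw [← hc.eq, hyb, hyb]
      _ = _ := by simp only [mul_assoc]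
  have hx : hS.inv c * y * c = p * (hS.inv w * y * w) := by
    rw [sandwich c w hyw, hp', mul_assoc,
      (hS.commute_of_isIdempotentElem (conj_idem w) hp).eq, ← mul_assoc, hp.eq]
  have hq : hS.inv w * y * w = p * (hS.inv c * y * c) := by
    rw [sandwich w c hyc, hp', mul_assoc,
      (hS.commute_of_isIdempotentElem (conj_idem c) hp).eq, ← mul_assoc, hp.eq]
  calc hS.inv c * y * c = p * (hS.inv w * y * w) := hx
    _ = p * (p * (hS.inv c * y * c)) := by rw [hq]
    _ = p * (hS.inv c * y * c) := hp.mul_self_mul _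
    _ = hS.inv w * y * w := hq.symm

lemma eq_of_isIdempotentElem_inv_mul {a b : S} (hp : IsIdempotentElem (hS.inv a * b))
    (h : a * hS.inv a = b * hS.inv b) : a = b := by
  have hp' : hS.inv b * a = hS.inv a * b := by
    rw [← hS.inv_eq_self hp, hS.inv_mul, hS.inv_inv]
  have ha : a = b * (hS.inv a * b) := by
    rw [← hp', ← mul_assoc, ← h, hS.mul_inv_mul]
  have hb : b = a * (hS.inv a * b) := by
    rw [← mul_assoc, h, hS.mul_inv_mul]
  calc a = b * (hS.inv a * b) := ha
    _ = a * (hS.inv a * b) * (hS.inv a * b) := by rw [← hb]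
    _ = b := by rw [hp.mul_mul_self, ← hb]

end IsInverseSemigroup

def MulHom.IsIdempotentPure {M N : Type*} [Mul M] [Mul N] (ρ : M →ₙ* N) : Prop :=
  ∀ a e : M, IsIdempotentElem e → ρ a = ρ e → IsIdempotentElem a

lemma MulHom.IsIdempotentPure.isIdempotentElem_inv_mul {I J : Type*} [Semigroup I] [Semigroup J]
    {ρ : I →ₙ* J} (hρ : ρ.IsIdempotentPure) (hI : IsInverseSemigroup I) {a b : I}
    (h : ρ a = ρ b) : IsIdempotentElem (hI.inv a * b) :=
  hρ _ _ (hI.isIdempotentElem_inv_mul a) (by rw [map_mul, map_mul, h])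

namespace IsInverseSemigroup

variable {I J : Type*} [Semigroup I] [Semigroup J] (hI : IsInverseSemigroup I) (ρ : I →ₙ* J)
  (U : Set I)

def conjTrace (x : I) : Set (J × U) :=
  {p | ∃ w, ρ w = p.1 ∧ x ≤ₑ w * (p.2 * hI.inv p.2) * hI.inv w}

lemma conjTrace_anti {x x' : I} (h : x ≤ₑ x') : hI.conjTrace ρ U x' ⊆ hI.conjTrace ρ U x :=
  fun _ ⟨w, hw, hx'⟩ => ⟨w, hw, mul_eq_self_trans h hx'⟩

theorem le_mul_inv_of_conjTrace_subset {ρ : I →ₙ* J} (hρ : ρ.IsIdempotentPure) {a : I}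
    (ha : a ∈ Subsemigroup.closure U) {y : I} (hy : IsIdempotentElem y)
    (h : hI.conjTrace ρ U (a * hI.inv a) ⊆ hI.conjTrace ρ U y) : y ≤ₑ a * hI.inv a := by
  induction ha using Subsemigroup.closure_induction_right generalizing y with
  | mem u hu =>
    have hr := hI.isIdempotentElem_mul_inv u
    obtain ⟨w, hw, hyw⟩ := h (show (ρ (u * hI.inv u), ⟨u, hu⟩) ∈ _ from
      ⟨u * hI.inv u, rfl, by simp only [hI.inv_eq_self hr, hr.eq]⟩)
    have hwr : IsIdempotentElem w := hρ w _ hr hw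
    have hc := hI.commute_of_isIdempotentElem hwr hr
    rw [hI.inv_eq_self hwr] at hyw
    refine mul_eq_self_trans hyw ?_
    grind [Commute, SemiconjBy, IsIdempotentElem]
  | mul_right c hc u hu ih =>
    have hrc : c * u * hI.inv (c * u) ≤ₑ c * hI.inv c := by
      rw [hI.mul_mul_inv_mul]
      exact hI.conj_le_mul_inv c _
    have hyc : y ≤ₑ c * hI.inv c := ih hy ((hI.conjTrace_anti ρ U hrc).trans h)
    obtain ⟨w, hw, hyw⟩ := h (show (ρ c, ⟨u, hu⟩) ∈ _ from
      ⟨c, rfl, by rw [← hI.mul_mul_inv_mul]; exact hI.isIdempotentElem_mul_inv _⟩)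
    have hz : hI.inv c * y * c = hI.inv w * y * w :=
      hI.inv_conj_eq_of_isIdempotentElem_inv_mul (hρ.isIdempotentElem_inv_mul hI hw.symm) hy hyc
        (mul_eq_self_trans hyw (hI.conj_le_mul_inv w _))
    rw [hI.mul_mul_inv_mul]
    exact hI.le_conj_of_inv_conj_le hy hyc
      (hz ▸ hI.inv_conj_le_of_le_conj (hI.isIdempotentElem_mul_inv u) hyw)

theorem mul_inv_eq_of_conjTrace_eq {ρ : I →ₙ* J} (hρ : ρ.IsIdempotentPure) {a b : I}
    (ha : a ∈ Subsemigroup.closure U) (hb : b ∈ Subsemigroup.closure U)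
    (h : hI.conjTrace ρ U (a * hI.inv a) = hI.conjTrace ρ U (b * hI.inv b)) :
    a * hI.inv a = b * hI.inv b := by
  have hab := hI.le_mul_inv_of_conjTrace_subset U hρ hb (hI.isIdempotentElem_mul_inv a) h.ge
  have hba := hI.le_mul_inv_of_conjTrace_subset U hρ ha (hI.isIdempotentElem_mul_inv b) h.le
  calc a * hI.inv a = a * hI.inv a * (b * hI.inv b) := hab.symm
    _ = b * hI.inv b * (a * hI.inv a) :=
      (hI.commute_of_isIdempotentElem (hI.isIdempotentElem_mul_inv a)
        (hI.isIdempotentElem_mul_inv b)).eq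
    _ = b * hI.inv b := hba

end IsInverseSemigroup

theorem finite_of_idempotentPure_quotient_general {I J : Type*} [Semigroup I] [Semigroup J]
    [Finite J]
    (hI : IsInverseSemigroup I)
    (hgen : ∃ U : Set I, U.Finite ∧ Subsemigroup.closure U = ⊤)
    (ρ : I →ₙ* J)
    (hpure : ∀ a e : I, IsIdempotentElem e → ρ a = ρ e → IsIdempotentElem a) :
    Finite I := by
  obtain ⟨U, hU, hUgen⟩ := hgen
  have : Finite U := hU.to_subtype
  have hρ : ρ.IsIdempotentPure := hpure
  have mem (a : I) : a ∈ Subsemigroup.closure U := hUgen ▸ Subsemigroup.mem_top a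
  refine Finite.of_injective (fun a => (ρ a, hI.conjTrace ρ U (a * hI.inv a))) fun a b hab => ?_
  obtain ⟨hρab, htrace⟩ := Prod.ext_iff.mp hab
  exact hI.eq_of_isIdempotentElem_inv_mul (hρ.isIdempotentElem_inv_mul hI hρab)
    (hI.mul_inv_eq_of_conjTrace_eq U hρ (mem a) (mem b) htrace)

theorem finite_of_idempotentPure_quotient {I J : Type*} [Semigroup I] [Semigroup J]
    [Finite J]
    (hI : IsInverseSemigroup I) (hJ : IsInverseSemigroup J)
    (hgen : ∃ U : Set I, U.Finite ∧ Subsemigroup.closure U = ⊤)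
    (ρ : I →ₙ* J) (hsurj : Function.Surjective ρ)
    (hpure : ∀ a e : I, IsIdempotentElem e → ρ a = ρ e → IsIdempotentElem a) :
    Finite I :=
  finite_of_idempotentPure_quotient_general hI hgen ρ hpure
end
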